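/- arXiv:1602.02546 — 3 statements merged into one kernel-verified Lean document; each statement's English description precedes it below -/
import Mathlib

section
/- Let H₁ and H₂ be complex Hilbert spaces, S a bounded selfadjoint operator on H₁, C : H₁ → H₂ a bounded operator, and J₂ a fundamental symmetry on H₂. Then ν₋(S) ≤ ν₋(S − C*∘J₂∘C) + ν₋(J₂) and ν₊(S) ≤ ν₊(S − C*∘J₂∘C) + ν₊(J₂) in ℕ∪{∞}. -/
/-!
Let `M` be a subspace on which `S` is negative definite and split it along the map
`x ↦ (1 - J₂) C x`. On its kernel `J₂ C x = C x`, so `⟨C* J₂ C x, x⟩ = ‖C x‖² ≥ 0` and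
`S - C* J₂ C` is still negative definite there; its range lies in the `-1`-eigenspace of `J₂`,
on which `J₂` is negative definite. Rank–nullity gives the bound for `ν₋`; replacing `S` and
`J₂` by `-S` and `-J₂` gives the one for `ν₊`.
-/

open ContinuousLinearMap

noncomputable section

/-- The negative index `ν₋(S)` of a bounded operator on a complex Hilbert space: the
supremum of `dim M` over all subspaces `M` on which the quadratic form
`x ↦ ⟨Sx, x⟩` is negative definite. -/
noncomputable def negIndex {H : Type*} [NormedAddCommGroup H] [InnerProductSpace ℂ H]
    (S : H →L[ℂ] H) : ℕ∞ :=
  ⨆ M : {M : Submodule ℂ H // ∀ x ∈ M, x ≠ 0 → (inner ℂ (S x) x : ℂ).re < 0},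
    (Module.rank ℂ (M : Submodule ℂ H)).toENat

/-- The positive index `ν₊(S)`. -/
noncomputable def posIndex {H : Type*} [NormedAddCommGroup H] [InnerProductSpace ℂ H]
    (S : H →L[ℂ] H) : ℕ∞ :=
  ⨆ M : {M : Submodule ℂ H // ∀ x ∈ M, x ≠ 0 → 0 < (inner ℂ (S x) x : ℂ).re},
    (Module.rank ℂ (M : Submodule ℂ H)).toENat

/-- The modulus `|C| = (C*C)^{1/2}` of a bounded operator. -/
noncomputable def absOp {H₁ H₂ : Type*} [NormedAddCommGroup H₁] [InnerProductSpace ℂ H₁]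
    [NormedAddCommGroup H₂] [InnerProductSpace ℂ H₂] [CompleteSpace H₁] [CompleteSpace H₂]
    (C : H₁ →L[ℂ] H₂) : H₁ →L[ℂ] H₁ :=
  CFC.sqrt (adjoint C ∘L C)

/-- The positive square root `|C|^{1/2}` of the modulus of a bounded operator. -/
noncomputable def sqrtAbs {H₁ H₂ : Type*} [NormedAddCommGroup H₁] [InnerProductSpace ℂ H₁]
    [NormedAddCommGroup H₂] [InnerProductSpace ℂ H₂] [CompleteSpace H₁] [CompleteSpace H₂]
    (C : H₁ →L[ℂ] H₂) : H₁ →L[ℂ] H₁ :=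
  CFC.sqrt (absOp C)

/-- The block operator `[[A₁₁, A₁₂], [A₂₁, A₂₂]]` on the Hilbert direct sum `H₁ ⊕ H₂`
(realized as `WithLp 2 (H₁ × H₂)`). -/
noncomputable def blockOp {H₁ H₂ : Type*} [NormedAddCommGroup H₁] [InnerProductSpace ℂ H₁]
    [NormedAddCommGroup H₂] [InnerProductSpace ℂ H₂]
    (A11 : H₁ →L[ℂ] H₁) (A12 : H₂ →L[ℂ] H₁) (A21 : H₁ →L[ℂ] H₂) (A22 : H₂ →L[ℂ] H₂) :
    WithLp 2 (H₁ × H₂) →L[ℂ] WithLp 2 (H₁ × H₂) :=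
  ((WithLp.prodContinuousLinearEquiv 2 ℂ H₁ H₂).symm : H₁ × H₂ →L[ℂ] WithLp 2 (H₁ × H₂)) ∘L
    ((A11 ∘L fst ℂ H₁ H₂ + A12 ∘L snd ℂ H₁ H₂).prod (A21 ∘L fst ℂ H₁ H₂ + A22 ∘L snd ℂ H₁ H₂)) ∘L
    ((WithLp.prodContinuousLinearEquiv 2 ℂ H₁ H₂) : WithLp 2 (H₁ × H₂) →L[ℂ] H₁ × H₂)

section

variable {H H₁ H₂ : Type*} [NormedAddCommGroup H] [InnerProductSpace ℂ H]
  [NormedAddCommGroup H₁] [InnerProductSpace ℂ H₁] [NormedAddCommGroup H₂] [InnerProductSpace ℂ H₂]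

theorem rank_le_negIndex {S : H →L[ℂ] H} {M : Submodule ℂ H}
    (hM : ∀ x ∈ M, x ≠ 0 → (inner ℂ (S x) x).re < 0) :
    (Module.rank ℂ M).toENat ≤ negIndex S :=
  le_iSup (fun M : {M : Submodule ℂ H // ∀ x ∈ M, x ≠ 0 → (inner ℂ (S x) x).re < 0} =>
    (Module.rank ℂ M.1).toENat) ⟨M, hM⟩

theorem posIndex_eq_negIndex_neg (S : H →L[ℂ] H) : posIndex S = negIndex (-S) :=
  (Equiv.subtypeEquivRight fun _ => by simp only [neg_apply, inner_neg_left, Complex.neg_re,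
    neg_lt_zero]).iSup_congr fun _ => rfl

theorem negIndex_le_negIndex_add_negIndex_of_linearMap {S T : H₁ →L[ℂ] H₁} {J : H₂ →L[ℂ] H₂}
    (φ : H₁ →ₗ[ℂ] H₂)
    (hker : ∀ x, φ x = 0 → x ≠ 0 → (inner ℂ (S x) x).re < 0 → (inner ℂ (T x) x).re < 0)
    (hrange : ∀ x, φ x ≠ 0 → (inner ℂ (J (φ x)) (φ x)).re < 0) :
    negIndex S ≤ negIndex T + negIndex J := by
  refine iSup_le fun ⟨M, hM⟩ => ?_
  set f := φ ∘ₗ M.subtype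
  have hT : ∀ x ∈ (LinearMap.ker f).map M.subtype, x ≠ 0 → (inner ℂ (T x) x).re < 0 := by
    rintro _ ⟨⟨x, hxM⟩, hx, rfl⟩ hx0
    exact hker x hx hx0 (hM x hxM hx0)
  have hJ : ∀ y ∈ LinearMap.range f, y ≠ 0 → (inner ℂ (J y) y).re < 0 := by
    rintro _ ⟨⟨x, _⟩, rfl⟩ hy0
    exact hrange x hy0
  have rank_ker : Module.rank ℂ ((LinearMap.ker f).map M.subtype) =
      Module.rank ℂ (LinearMap.ker f) :=
    (Submodule.equivMapOfInjective M.subtype M.injective_subtype _).symm.rank_eq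
  have rank_nullity : (Module.rank ℂ M).toENat =
      (Module.rank ℂ (LinearMap.ker f)).toENat + (Module.rank ℂ (LinearMap.range f)).toENat := by
    simpa [Cardinal.toENat_lift, add_comm] using
      congrArg Cardinal.toENat (LinearMap.lift_rank_range_add_rank_ker f).symm
  rw [rank_nullity, ← rank_ker]
  exact add_le_add (rank_le_negIndex hT) (rank_le_negIndex hJ)

end

section

variable {H₁ H₂ : Type*} [NormedAddCommGroup H₁] [InnerProductSpace ℂ H₁] [CompleteSpace H₁]
  [NormedAddCommGroup H₂] [InnerProductSpace ℂ H₂] [CompleteSpace H₂]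

theorem inner_sub_adjoint_comp_comp_apply (S : H₁ →L[ℂ] H₁) (C : H₁ →L[ℂ] H₂)
    (J : H₂ →L[ℂ] H₂) (x : H₁) :
    inner ℂ ((S - adjoint C ∘L J ∘L C) x) x = inner ℂ (S x) x - inner ℂ (J (C x)) (C x) := by
  rw [sub_apply, inner_sub_left, comp_apply, adjoint_inner_left, comp_apply]

theorem negIndex_le_negIndex_sub_adjoint_comp_comp_add {J : H₂ →L[ℂ] H₂} (hJ : J ∘L J = 1)
    (S : H₁ →L[ℂ] H₁) (C : H₁ →L[ℂ] H₂) :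
    negIndex S ≤ negIndex (S - adjoint C ∘L J ∘L C) + negIndex J := by
  have hJJ (u : H₂) : J (J u) = u := congr($hJ u)
  refine negIndex_le_negIndex_add_negIndex_of_linearMap (C - J ∘L C : H₁ →L[ℂ] H₂) ?_ ?_
  · intro x hx _ hSx
    have hJC : J (C x) = C x := (sub_eq_zero.mp hx).symm
    rw [inner_sub_adjoint_comp_comp_apply, hJC, Complex.sub_re]
    have : 0 ≤ (inner ℂ (C x) (C x)).re := inner_self_nonneg (𝕜 := ℂ)
    linarith
  · intro x hx
    have hJy : J (C x - J (C x)) = -(C x - J (C x)) := by rw [map_sub, hJJ, neg_sub]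
    simp only [coe_coe, sub_apply, comp_apply] at hx ⊢
    rw [hJy, inner_neg_left, Complex.neg_re, neg_lt_zero]
    exact re_inner_self_pos (𝕜 := ℂ) |>.mpr hx

theorem posIndex_le_posIndex_sub_adjoint_comp_comp_add {J : H₂ →L[ℂ] H₂} (hJ : J ∘L J = 1)
    (S : H₁ →L[ℂ] H₁) (C : H₁ →L[ℂ] H₂) :
    posIndex S ≤ posIndex (S - adjoint C ∘L J ∘L C) + posIndex J := by
  have hJneg : (-J) ∘L (-J) = 1 := by rw [neg_comp, comp_neg, neg_neg, hJ]
  have hneg_sub : -S - adjoint C ∘L (-J) ∘L C = -(S - adjoint C ∘L J ∘L C) := by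
    rw [neg_comp, comp_neg, sub_neg_eq_add, neg_sub', sub_neg_eq_add]
  simpa only [posIndex_eq_negIndex_neg, hneg_sub] using
    negIndex_le_negIndex_sub_adjoint_comp_comp_add hJneg (-S) C

end

theorem statement_7_general
    {H₁ H₂ : Type*} [NormedAddCommGroup H₁] [InnerProductSpace ℂ H₁] [CompleteSpace H₁]
    [NormedAddCommGroup H₂] [InnerProductSpace ℂ H₂] [CompleteSpace H₂]
    (S : H₁ →L[ℂ] H₁) (C : H₁ →L[ℂ] H₂)
    (J₂ : H₂ →L[ℂ] H₂) (hJ₂sq : J₂ ∘L J₂ = 1) :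
    negIndex S ≤ negIndex (S - adjoint C ∘L J₂ ∘L C) + negIndex J₂ ∧
    posIndex S ≤ posIndex (S - adjoint C ∘L J₂ ∘L C) + posIndex J₂ :=
  ⟨negIndex_le_negIndex_sub_adjoint_comp_comp_add hJ₂sq S C,
    posIndex_le_posIndex_sub_adjoint_comp_comp_add hJ₂sq S C⟩

theorem statement_7
    {H₁ H₂ : Type*} [NormedAddCommGroup H₁] [InnerProductSpace ℂ H₁] [CompleteSpace H₁]
    [NormedAddCommGroup H₂] [InnerProductSpace ℂ H₂] [CompleteSpace H₂]
    (S : H₁ →L[ℂ] H₁) (hS : IsSelfAdjoint S) (C : H₁ →L[ℂ] H₂)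
    (J₂ : H₂ →L[ℂ] H₂) (hJ₂sa : IsSelfAdjoint J₂) (hJ₂sq : J₂ ∘L J₂ = 1) :
    negIndex S ≤ negIndex (S - adjoint C ∘L J₂ ∘L C) + negIndex J₂ ∧
    posIndex S ≤ posIndex (S - adjoint C ∘L J₂ ∘L C) + posIndex J₂ :=
  statement_7_general S C J₂ hJ₂sq
end
end

section
/- Let H be a complex Hilbert space, J a fundamental symmetry on H, and T a bounded selfadjoint operator on H. Let M = [[J, T],[T, J]] be the block operator on the Hilbert direct sum H⊕H and let U = (1/√2)·[[I, I],[I, −I]] (a unitary operator on H⊕H). Then |M|^{1/2} = U ∘ diag(|J+T|^{1/2}, |J−T|^{1/2}) ∘ U*. -/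
open ContinuousLinearMap

noncomputable section

/-!
The unitary `U` block-diagonalizes `M`: `M = U ∘ diag(J + T, J - T) ∘ U*`. Both `|·|` and the
positive square root are characterized by uniqueness of positive square roots, so they commute
with conjugation by an isometry and act entrywise on block-diagonal operators.
-/

namespace CFC

variable {A : Type*} [CStarAlgebra A] [PartialOrder A] [StarOrderedRing A]

lemma sqrt_conj {u a : A} (hu : star u * u = 1) (ha : 0 ≤ a) :
    sqrt (u * a * star u) = u * sqrt a * star u := by
  refine sqrt_unique ?_ (star_right_conjugate_nonneg (sqrt_nonneg a) u)
  calc u * sqrt a * star u * (u * sqrt a * star u)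
      = u * sqrt a * (star u * u) * sqrt a * star u := by simp only [mul_assoc]
    _ = u * a * star u := by rw [hu, mul_one, mul_assoc u, sqrt_mul_sqrt_self a]

lemma sqrt_star_mul_self_conj {u : A} (hu : star u * u = 1) (a : A) :
    sqrt (star (u * a * star u) * (u * a * star u)) = u * sqrt (star a * a) * star u := by
  have h : star (u * a * star u) * (u * a * star u) = u * (star a * a) * star u := by
    calc star (u * a * star u) * (u * a * star u)
        = u * star a * (star u * u) * a * star u := by simp only [star_mul, star_star, mul_assoc]
      _ = u * (star a * a) * star u := by rw [hu, mul_one]; simp only [mul_assoc]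
  rw [h, sqrt_conj hu (star_mul_self_nonneg a)]

end CFC

namespace WithLp

lemma prod_ext {E F : Type*} {x y : WithLp 2 (E × F)} (h₁ : x.fst = y.fst) (h₂ : x.snd = y.snd) :
    x = y :=
  WithLp.ofLp_injective 2 (Prod.ext h₁ h₂)

end WithLp

section blockOp

variable {H₁ H₂ : Type*} [NormedAddCommGroup H₁] [InnerProductSpace ℂ H₁]
  [NormedAddCommGroup H₂] [InnerProductSpace ℂ H₂]

@[simp]
lemma blockOp_fst (A₁₁ : H₁ →L[ℂ] H₁) (A₁₂ : H₂ →L[ℂ] H₁) (A₂₁ : H₁ →L[ℂ] H₂)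
    (A₂₂ : H₂ →L[ℂ] H₂) (x : WithLp 2 (H₁ × H₂)) :
    (blockOp A₁₁ A₁₂ A₂₁ A₂₂ x).fst = A₁₁ x.fst + A₁₂ x.snd := rfl

@[simp]
lemma blockOp_snd (A₁₁ : H₁ →L[ℂ] H₁) (A₁₂ : H₂ →L[ℂ] H₁) (A₂₁ : H₁ →L[ℂ] H₂)
    (A₂₂ : H₂ →L[ℂ] H₂) (x : WithLp 2 (H₁ × H₂)) :
    (blockOp A₁₁ A₁₂ A₂₁ A₂₂ x).snd = A₂₁ x.fst + A₂₂ x.snd := rfl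

lemma blockOp_comp (A₁₁ B₁₁ : H₁ →L[ℂ] H₁) (A₁₂ B₁₂ : H₂ →L[ℂ] H₁) (A₂₁ B₂₁ : H₁ →L[ℂ] H₂)
    (A₂₂ B₂₂ : H₂ →L[ℂ] H₂) :
    blockOp A₁₁ A₁₂ A₂₁ A₂₂ ∘L blockOp B₁₁ B₁₂ B₂₁ B₂₂ =
      blockOp (A₁₁ ∘L B₁₁ + A₁₂ ∘L B₂₁) (A₁₁ ∘L B₁₂ + A₁₂ ∘L B₂₂)
        (A₂₁ ∘L B₁₁ + A₂₂ ∘L B₂₁) (A₂₁ ∘L B₁₂ + A₂₂ ∘L B₂₂) := by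
  refine ContinuousLinearMap.ext fun x => WithLp.prod_ext ?_ ?_ <;>
    simp only [comp_apply, blockOp_fst, blockOp_snd, map_add, add_apply] <;> abel

lemma smul_blockOp (c : ℂ) (A₁₁ : H₁ →L[ℂ] H₁) (A₁₂ : H₂ →L[ℂ] H₁) (A₂₁ : H₁ →L[ℂ] H₂)
    (A₂₂ : H₂ →L[ℂ] H₂) :
    c • blockOp A₁₁ A₁₂ A₂₁ A₂₂ = blockOp (c • A₁₁) (c • A₁₂) (c • A₂₁) (c • A₂₂) := by
  refine ContinuousLinearMap.ext fun x => WithLp.prod_ext ?_ ?_ <;> simp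

lemma blockOp_one_zero_zero_one : blockOp (1 : H₁ →L[ℂ] H₁) 0 0 (1 : H₂ →L[ℂ] H₂) = 1 := by
  refine ContinuousLinearMap.ext fun x => WithLp.prod_ext ?_ ?_ <;> simp

variable [CompleteSpace H₁] [CompleteSpace H₂]

lemma adjoint_blockOp (A₁₁ : H₁ →L[ℂ] H₁) (A₁₂ : H₂ →L[ℂ] H₁) (A₂₁ : H₁ →L[ℂ] H₂)
    (A₂₂ : H₂ →L[ℂ] H₂) :
    adjoint (blockOp A₁₁ A₁₂ A₂₁ A₂₂) =
      blockOp (adjoint A₁₁) (adjoint A₂₁) (adjoint A₁₂) (adjoint A₂₂) := by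
  refine ((eq_adjoint_iff _ _).mpr fun x y => ?_).symm
  simp only [WithLp.prod_inner_apply, WithLp.ofLp_fst, WithLp.ofLp_snd, blockOp_fst, blockOp_snd,
    inner_add_left, inner_add_right, adjoint_inner_left]
  ring

lemma blockOp_diag_nonneg {A : H₁ →L[ℂ] H₁} {B : H₂ →L[ℂ] H₂} (hA : 0 ≤ A) (hB : 0 ≤ B) :
    0 ≤ blockOp A 0 0 B := by
  rw [nonneg_iff_isPositive] at hA hB ⊢
  refine isPositive_def'.mpr ⟨?_, fun x => ?_⟩
  · rw [IsSelfAdjoint, star_eq_adjoint, adjoint_blockOp, hA.isSelfAdjoint.adjoint_eq,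
      hB.isSelfAdjoint.adjoint_eq, map_zero, map_zero]
  · simpa [reApplyInnerSelf, WithLp.prod_inner_apply] using
      add_nonneg (hA.re_inner_nonneg_left x.fst) (hB.re_inner_nonneg_left x.snd)

set_option synthInstance.maxHeartbeats 200000 in
lemma sqrt_blockOp_diag {A : H₁ →L[ℂ] H₁} {B : H₂ →L[ℂ] H₂} (hA : 0 ≤ A) (hB : 0 ≤ B) :
    CFC.sqrt (blockOp A 0 0 B) = blockOp (CFC.sqrt A) 0 0 (CFC.sqrt B) := by
  refine CFC.sqrt_unique ?_ (blockOp_diag_nonneg (CFC.sqrt_nonneg A) (CFC.sqrt_nonneg B))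
  rw [mul_def, blockOp_comp, ← mul_def, ← mul_def, CFC.sqrt_mul_sqrt_self A,
    CFC.sqrt_mul_sqrt_self B]
  simp

lemma absOp_blockOp_diag (A : H₁ →L[ℂ] H₁) (B : H₂ →L[ℂ] H₂) :
    absOp (blockOp A 0 0 B) = blockOp (absOp A) 0 0 (absOp B) := by
  rw [absOp, adjoint_blockOp, blockOp_comp]
  simp only [map_zero, zero_comp, comp_zero, add_zero, zero_add]
  exact sqrt_blockOp_diag ((nonneg_iff_isPositive _).mpr (isPositive_adjoint_comp_self A))
    ((nonneg_iff_isPositive _).mpr (isPositive_adjoint_comp_self B))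

lemma sqrtAbs_blockOp_diag (A : H₁ →L[ℂ] H₁) (B : H₂ →L[ℂ] H₂) :
    sqrtAbs (blockOp A 0 0 B) = blockOp (sqrtAbs A) 0 0 (sqrtAbs B) := by
  unfold sqrtAbs
  rw [absOp_blockOp_diag]
  exact sqrt_blockOp_diag (CFC.sqrt_nonneg _) (CFC.sqrt_nonneg _)

end blockOp

section conj

variable {E : Type*} [NormedAddCommGroup E] [InnerProductSpace ℂ E] [CompleteSpace E]
  {U : E →L[ℂ] E}

lemma absOp_conj (hU : adjoint U ∘L U = 1) (C : E →L[ℂ] E) :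
    absOp (U ∘L C ∘L adjoint U) = U ∘L absOp C ∘L adjoint U := by
  have hU' : star U * U = 1 := hU
  unfold absOp
  simpa only [star_eq_adjoint, mul_def, comp_assoc] using CFC.sqrt_star_mul_self_conj hU' C

lemma sqrtAbs_conj (hU : adjoint U ∘L U = 1) (C : E →L[ℂ] E) :
    sqrtAbs (U ∘L C ∘L adjoint U) = U ∘L sqrtAbs C ∘L adjoint U := by
  have hU' : star U * U = 1 := hU
  unfold sqrtAbs
  rw [absOp_conj hU]
  simpa only [star_eq_adjoint, mul_def, comp_assoc] using
    CFC.sqrt_conj (a := absOp C) hU' (CFC.sqrt_nonneg _)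

end conj

lemma inv_sqrt_two_mul_self : ((Real.sqrt 2 : ℂ))⁻¹ * ((Real.sqrt 2 : ℂ))⁻¹ = 2⁻¹ := by
  rw [← mul_inv, ← Complex.ofReal_mul, Real.mul_self_sqrt zero_le_two, Complex.ofReal_ofNat]

section hadamard

variable (H : Type*) [NormedAddCommGroup H] [InnerProductSpace ℂ H]

def hadamard : WithLp 2 (H × H) →L[ℂ] WithLp 2 (H × H) :=
  ((Real.sqrt 2 : ℂ))⁻¹ • blockOp (1 : H →L[ℂ] H) 1 1 (-1)

lemma hadamard_comp_hadamard : hadamard H ∘L hadamard H = 1 := by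
  rw [hadamard, smul_comp, comp_smul, smul_smul, inv_sqrt_two_mul_self, blockOp_comp,
    ← blockOp_one_zero_zero_one, smul_blockOp]
  congr 1 <;> ext <;>
    simp only [add_apply, neg_apply, zero_apply, smul_apply, comp_apply, one_apply_eq_self,
      map_neg] <;> module

variable [CompleteSpace H]

lemma adjoint_hadamard : adjoint (hadamard H) = hadamard H := by
  rw [hadamard, ← star_eq_adjoint, star_smul, star_eq_adjoint, adjoint_blockOp]
  simp [← star_eq_adjoint, Complex.conj_ofReal]

variable {H}

lemma blockOp_eq_hadamard_conj (J T : H →L[ℂ] H) :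
    blockOp J T T J = hadamard H ∘L blockOp (J + T) 0 0 (J - T) ∘L adjoint (hadamard H) := by
  rw [adjoint_hadamard, hadamard]
  simp only [smul_comp, comp_smul, smul_smul]
  rw [inv_sqrt_two_mul_self, blockOp_comp, blockOp_comp, smul_blockOp]
  congr 1 <;> ext <;>
    simp only [add_apply, sub_apply, neg_apply, zero_apply, smul_apply, comp_apply,
      one_apply_eq_self, map_neg] <;> module

end hadamard

theorem statement_8_general
    {H : Type*} [NormedAddCommGroup H] [InnerProductSpace ℂ H] [CompleteSpace H]
    (J : H →L[ℂ] H)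
    (T : H →L[ℂ] H)
    (M : WithLp 2 (H × H) →L[ℂ] WithLp 2 (H × H)) (hM : M = blockOp J T T J)
    (U : WithLp 2 (H × H) →L[ℂ] WithLp 2 (H × H))
    (hU : U = ((Real.sqrt 2 : ℂ))⁻¹ • blockOp (1 : H →L[ℂ] H) 1 1 (-1)) :
    sqrtAbs M = U ∘L blockOp (sqrtAbs (J + T)) 0 0 (sqrtAbs (J - T)) ∘L adjoint U := by
  obtain rfl : U = hadamard H := hU
  have hU : adjoint (hadamard H) ∘L hadamard H = 1 := by
    rw [adjoint_hadamard, hadamard_comp_hadamard]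
  rw [hM, blockOp_eq_hadamard_conj, sqrtAbs_conj hU, sqrtAbs_blockOp_diag]

theorem statement_8
    {H : Type*} [NormedAddCommGroup H] [InnerProductSpace ℂ H] [CompleteSpace H]
    (J : H →L[ℂ] H) (hJsa : IsSelfAdjoint J) (hJsq : J ∘L J = 1)
    (T : H →L[ℂ] H) (hT : IsSelfAdjoint T)
    (M : WithLp 2 (H × H) →L[ℂ] WithLp 2 (H × H)) (hM : M = blockOp J T T J)
    (U : WithLp 2 (H × H) →L[ℂ] WithLp 2 (H × H))
    (hU : U = ((Real.sqrt 2 : ℂ))⁻¹ • blockOp (1 : H →L[ℂ] H) 1 1 (-1)) :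
    sqrtAbs M = U ∘L blockOp (sqrtAbs (J + T)) 0 0 (sqrtAbs (J - T)) ∘L adjoint U :=
  statement_8_general J T M hM U hU

end
end

section
/- Let H be a complex Hilbert space, J a fundamental symmetry on H, and T a bounded operator on H with T* = J∘T∘J (i.e., T is selfadjoint in the Kreĭn space (H,J)). Define the defect operators D_T := |J − T*∘J∘T|^{1/2} and D_{T*} := |J − T∘J∘T*|^{1/2}. Then D_T = |I − T²|^{1/2}, D_{T*} = J∘D_T∘J, and consequently closure(ran D_{T*}) = J(closure(ran D_T)) and closure(ran D_T) = J(closure(ran D_{T*})). -/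
open ContinuousLinearMap

noncomputable section

/-! If `T* = JTJ` and `J² = 1`, then `J - T*JT = J(1 - T²)` and `J - TJT* = (1 - T²)J`. As `J` is
unitary, a factor `J` on the left leaves the modulus unchanged, while a factor `J` on the right
conjugates it by `J`; the square root commutes with unitary conjugation by uniqueness of positive
square roots. Finally `J` is a homeomorphism, so it carries closures of ranges to closures of
ranges. -/

namespace CFC

variable {A : Type*} [Ring A] [StarRing A] [TopologicalSpace A] [PartialOrder A]
  [StarOrderedRing A] [Algebra ℝ A] [ContinuousFunctionalCalculus ℝ A IsSelfAdjoint]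
  [NonnegSpectrumClass ℝ A] [IsSemitopologicalRing A] [T2Space A]

lemma sqrt_star_mul_mul_of_mul_star_self_eq_one {u a : A} (hu : u * star u = 1) (ha : 0 ≤ a) :
    sqrt (star u * a * u) = star u * sqrt a * u := by
  refine sqrt_unique ?_ (star_left_conjugate_nonneg (sqrt_nonneg a) u)
  calc star u * sqrt a * u * (star u * sqrt a * u)
      = star u * sqrt a * (u * star u) * sqrt a * u := by noncomm_ring
    _ = star u * a * u := by rw [hu, mul_one, mul_assoc (star u), sqrt_mul_sqrt_self a ha]

end CFC

section Modulus

variable {H₁ H₂ H₃ : Type*} [NormedAddCommGroup H₁] [InnerProductSpace ℂ H₁] [CompleteSpace H₁]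
  [NormedAddCommGroup H₂] [InnerProductSpace ℂ H₂] [CompleteSpace H₂]
  [NormedAddCommGroup H₃] [InnerProductSpace ℂ H₃] [CompleteSpace H₃]

lemma absOp_nonneg (C : H₁ →L[ℂ] H₂) : 0 ≤ absOp C := CFC.sqrt_nonneg _

lemma absOp_isometry_comp {U : H₂ →L[ℂ] H₃} (hU : adjoint U ∘L U = 1) (C : H₁ →L[ℂ] H₂) :
    absOp (U ∘L C) = absOp C := by
  rw [absOp, absOp, adjoint_comp, comp_assoc, ← comp_assoc (adjoint U), hU, one_def, id_comp]

lemma absOp_comp_coisometry {U : H₁ →L[ℂ] H₁} (hU : U ∘L adjoint U = 1) (C : H₁ →L[ℂ] H₂) :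
    absOp (C ∘L U) = adjoint U ∘L absOp C ∘L U := by
  have hCC : 0 ≤ adjoint C ∘L C := (nonneg_iff_isPositive _).2 (isPositive_adjoint_comp_self C)
  have h := CFC.sqrt_star_mul_mul_of_mul_star_self_eq_one (u := U) hU hCC
  simp only [star_eq_adjoint, mul_def, comp_assoc] at h
  simpa only [absOp, adjoint_comp, comp_assoc] using h

lemma sqrtAbs_isometry_comp {U : H₂ →L[ℂ] H₃} (hU : adjoint U ∘L U = 1) (C : H₁ →L[ℂ] H₂) :
    sqrtAbs (U ∘L C) = sqrtAbs C := by
  rw [sqrtAbs, sqrtAbs, absOp_isometry_comp hU]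

lemma sqrtAbs_comp_coisometry {U : H₁ →L[ℂ] H₁} (hU : U ∘L adjoint U = 1) (C : H₁ →L[ℂ] H₂) :
    sqrtAbs (C ∘L U) = adjoint U ∘L sqrtAbs C ∘L U := by
  have h := CFC.sqrt_star_mul_mul_of_mul_star_self_eq_one (u := U) hU (absOp_nonneg C)
  simp only [star_eq_adjoint, mul_def, comp_assoc] at h
  rw [sqrtAbs, sqrtAbs, absOp_comp_coisometry hU, h]

end Modulus

section Involution

variable {R M : Type*} [Semiring R] [TopologicalSpace M] [AddCommMonoid M] [Module R M]
  {J : M →L[R] M}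

lemma apply_apply_of_comp_self_eq_one (hJ : J ∘L J = 1) (x : M) : J (J x) = x :=
  congrArg (fun S : M →L[R] M => S x) hJ

lemma closure_range_conj_of_comp_self_eq_one (hJ : J ∘L J = 1) (D : M →L[R] M) :
    closure (Set.range (J ∘L D ∘L J)) = J '' closure (Set.range D) := by
  have hJJ := apply_apply_of_comp_self_eq_one hJ
  have hrange : Set.range (J ∘L D ∘L J) = J '' Set.range D := by
    rw [coe_comp, coe_comp, Set.range_comp, (Function.RightInverse.surjective hJJ).range_comp]
  rw [hrange]
  exact ((ContinuousLinearEquiv.equivOfInverse J J hJJ hJJ).image_closure _).symm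

end Involution

section KreinSelfAdjoint

variable {H : Type*} [NormedAddCommGroup H] [InnerProductSpace ℂ H] [CompleteSpace H]
  {J T : H →L[ℂ] H}

lemma sub_adjoint_comp_comp_eq_of_adjoint_eq_conj (hJ : J ∘L J = 1)
    (hT : adjoint T = J ∘L T ∘L J) : J - adjoint T ∘L J ∘L T = J ∘L (1 - T ∘L T) := by
  ext x
  simp [hT, apply_apply_of_comp_self_eq_one hJ]

lemma sub_comp_comp_adjoint_eq_of_adjoint_eq_conj (hJ : J ∘L J = 1)
    (hT : adjoint T = J ∘L T ∘L J) : J - T ∘L J ∘L adjoint T = (1 - T ∘L T) ∘L J := by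
  ext x
  simp [hT, apply_apply_of_comp_self_eq_one hJ]

end KreinSelfAdjoint

theorem statement_10
    {H : Type*} [NormedAddCommGroup H] [InnerProductSpace ℂ H] [CompleteSpace H]
    (J : H →L[ℂ] H) (hJsa : IsSelfAdjoint J) (hJsq : J ∘L J = 1)
    (T : H →L[ℂ] H) (hT : adjoint T = J ∘L T ∘L J)
    (DT : H →L[ℂ] H) (hDT : DT = sqrtAbs (J - adjoint T ∘L J ∘L T))
    (DTs : H →L[ℂ] H) (hDTs : DTs = sqrtAbs (J - T ∘L J ∘L adjoint T)) :
    DT = sqrtAbs (1 - T ∘L T) ∧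
    DTs = J ∘L DT ∘L J ∧
    closure (Set.range ⇑DTs) = ⇑J '' closure (Set.range ⇑DT) ∧
    closure (Set.range ⇑DT) = ⇑J '' closure (Set.range ⇑DTs) := by
  have hJ_isometry : adjoint J ∘L J = 1 := by rw [hJsa.adjoint_eq, hJsq]
  have hJ_coisometry : J ∘L adjoint J = 1 := by rw [hJsa.adjoint_eq, hJsq]
  have hDT' : DT = sqrtAbs (1 - T ∘L T) := by
    rw [hDT, sub_adjoint_comp_comp_eq_of_adjoint_eq_conj hJsq hT, sqrtAbs_isometry_comp hJ_isometry]
  have hDTs' : DTs = J ∘L DT ∘L J := by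
    rw [hDTs, sub_comp_comp_adjoint_eq_of_adjoint_eq_conj hJsq hT,
      sqrtAbs_comp_coisometry hJ_coisometry, hJsa.adjoint_eq, hDT']
  have hDT_conj : DT = J ∘L DTs ∘L J := by
    ext x
    simp [hDTs', apply_apply_of_comp_self_eq_one hJsq]
  refine ⟨hDT', hDTs', ?_, ?_⟩
  · rw [hDTs', closure_range_conj_of_comp_self_eq_one hJsq]
  · rw [hDT_conj, closure_range_conj_of_comp_self_eq_one hJsq]

end
end
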